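/- arXiv:2409.12290 — 2 statements merged into one kernel-verified Lean document; each statement's English description precedes it below -/
import Mathlib

section
/- Let J : ℝⁿ → ℝ be continuously differentiable, coercive (J(θ) → ∞ as ‖θ‖ → ∞), with a unique global minimizer θ* (J(θ*) < J(θ) for all θ ≠ θ*) and ∇J(θ) = 0 if and only if θ = θ*. Fix k > 0, ε > 0, c > 0, and V ≥ 0. Then there exists η > 0 such that the following holds: for every continuous g : ℝⁿ → ℝⁿ satisfying |g_i(θ) − ∂J/∂θ_i(θ)| ≤ η for all i and all θ in the sublevel set S_c = {θ : J(θ) − J(θ*) ≤ c}, and for every pair of functions θ̄ : [0, ∞) → ℝⁿ differentiable and v̄ : [0, ∞) → [0, V]ⁿ with (d/dt)θ̄_i(t) = −k g_i(θ̄(t)) / (√(v̄_i(t)) + ε) for all t ≥ 0 and all i, if θ̄(0) ∈ S_c then θ̄(t) ∈ S_c for all t ≥ 0 (the sublevel set S_c is forward invariant). -/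
/-!
By coercivity the sublevel set `S_c` is compact, hence so is the level set `J - J θ* = c`,
on which `∇J` does not vanish (`c > 0`); so `‖∇J‖ ≥ δ > 0` there. Along the flow,
`d/dt J(θ̄) = -k ∑ᵢ ∂ᵢJ · gᵢ / (√v̄ᵢ + ε)`, and with denominators in `[ε, √V + ε]` this is at most
`-k ‖∇J‖² / (√V + ε) + n k η ‖∇J‖ / ε`, which is negative on the level set once
`η < δ ε / ((√V + ε) n)`. A trajectory therefore can never cross the level set outwards.
-/

open Set InnerProductSpace

theorem isCompact_sublevel_of_coercive {E : Type*} [NormedAddCommGroup E] [ProperSpace E]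
    {f : E → ℝ} (hf : Continuous f) (hcoercive : ∀ M : ℝ, ∃ R : ℝ, ∀ x : E, R ≤ ‖x‖ → M ≤ f x)
    (a : ℝ) : IsCompact {x | f x ≤ a} := by
  obtain ⟨R, hR⟩ := hcoercive (a + 1)
  refine Metric.isCompact_of_isClosed_isBounded (isClosed_le hf continuous_const)
    ((Metric.isBounded_closedBall (x := 0) (r := R)).subset fun x hx => ?_)
  rw [mem_closedBall_zero_iff]
  by_contra! hRx
  linarith [hR x hRx.le, show f x ≤ a from hx]

theorem ContDiff.continuous_gradient {F : Type*} [NormedAddCommGroup F] [InnerProductSpace ℝ F]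
    [CompleteSpace F] {f : F → ℝ} (hf : ContDiff ℝ 1 f) : Continuous (gradient f) :=
  (toDual ℝ F).symm.continuous.comp (hf.continuous_fderiv one_ne_zero)

theorem EuclideanSpace.hasDerivAt_of_forall_apply {ι : Type*} [Fintype ι]
    {γ : ℝ → EuclideanSpace ℝ ι} {γ' : EuclideanSpace ℝ ι} {t : ℝ}
    (h : ∀ i, HasDerivAt (fun s => γ s i) (γ' i) t) : HasDerivAt γ γ' t :=
  (PiLp.hasFDerivAt_toLp 2 _).comp_hasDerivAt (f := fun s => WithLp.ofLp (γ s)) t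
    (hasDerivAt_pi.2 h)

theorem HasGradientAt.hasDerivAt_comp_of_forall_apply {ι : Type*} [Fintype ι]
    {f : EuclideanSpace ℝ ι → ℝ} {f' : EuclideanSpace ℝ ι} {γ : ℝ → EuclideanSpace ℝ ι}
    {d : ι → ℝ} {t : ℝ} (hf : HasGradientAt f f' (γ t))
    (hγ : ∀ i, HasDerivAt (fun s => γ s i) (d i) t) :
    HasDerivAt (fun s => f (γ s)) (∑ i, f' i * d i) t := by
  have := (hasGradientAt_iff_hasFDerivAt.1 hf).comp_hasDerivAt t
    (EuclideanSpace.hasDerivAt_of_forall_apply (γ' := WithLp.toLp 2 d) hγ)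
  have hinner : ⟪f', WithLp.toLp 2 d⟫_ℝ = ∑ i, f' i * d i := by
    simp only [PiLp.inner_apply, RCLike.inner_apply, conj_trivial, mul_comm]
  rwa [toDual_apply_apply, hinner] at this

theorem le_of_hasDerivAt_neg_at_level {f f' : ℝ → ℝ} {a : ℝ}
    (hf : ∀ t, 0 ≤ t → HasDerivAt f (f' t) t) (h0 : f 0 ≤ a)
    (hlevel : ∀ t, 0 ≤ t → f t = a → f' t < 0) {t : ℝ} (ht : 0 ≤ t) : f t ≤ a :=
  image_le_of_deriv_right_lt_deriv_boundary (a := 0) (b := t) (B := fun _ => a) (B' := 0)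
    (fun s hs => (hf s hs.1).continuousAt.continuousWithinAt)
    (fun s hs => (hf s hs.1).hasDerivWithinAt) h0 (fun _ => hasDerivAt_const _ _)
    (fun s hs => hlevel s hs.1) ⟨ht, le_rfl⟩

theorem mul_neg_mul_div_le {a g s k η ε B : ℝ} (hk : 0 ≤ k) (hε : 0 < ε) (hεs : ε ≤ s)
    (hsB : s ≤ B) (hg : |g - a| ≤ η) :
    a * (-k * g / s) ≤ -k * a ^ 2 / B + k * η * |a| / ε := by
  have hs : 0 < s := hε.trans_le hεs
  have hdescent : -k * a ^ 2 / s ≤ -k * a ^ 2 / B := by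
    rw [neg_mul, neg_div, neg_div, neg_le_neg_iff]
    gcongr
  have herror : -k * (a * (g - a)) / s ≤ k * η * |a| / ε := by
    have hnum : -k * (a * (g - a)) ≤ k * η * |a| := by
      calc -k * (a * (g - a)) = k * -(a * (g - a)) := by ring
        _ ≤ k * (|a| * |g - a|) := by rw [← abs_mul]; gcongr; exact neg_le_abs _
        _ ≤ k * (|a| * η) := by gcongr
        _ = k * η * |a| := by ring
    calc -k * (a * (g - a)) / s ≤ k * η * |a| / s := by gcongr
      _ ≤ k * η * |a| / ε := by
        have : 0 ≤ η := (abs_nonneg _).trans hg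
        gcongr
  calc a * (-k * g / s) = -k * a ^ 2 / s + -k * (a * (g - a)) / s := by ring
    _ ≤ _ := add_le_add hdescent herror

theorem sum_mul_neg_mul_div_le {ι : Type*} [Fintype ι] (a : EuclideanSpace ℝ ι) {g s : ι → ℝ}
    {k η ε B : ℝ} (hk : 0 ≤ k) (hε : 0 < ε) (hs : ∀ i, ε ≤ s i ∧ s i ≤ B)
    (hg : ∀ i, |g i - a i| ≤ η) :
    ∑ i, a i * (-k * g i / s i) ≤ -k * ‖a‖ ^ 2 / B + Fintype.card ι * (k * η * ‖a‖ / ε) := by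
  have hterm : ∀ i, a i * (-k * g i / s i) ≤ -k * a i ^ 2 / B + k * η * ‖a‖ / ε := fun i => by
    have hη : 0 ≤ η := (abs_nonneg _).trans (hg i)
    have hai : |a i| ≤ ‖a‖ := PiLp.norm_apply_le a i
    calc a i * (-k * g i / s i) ≤ -k * a i ^ 2 / B + k * η * |a i| / ε :=
          mul_neg_mul_div_le hk hε (hs i).1 (hs i).2 (hg i)
      _ ≤ -k * a i ^ 2 / B + k * η * ‖a‖ / ε := by gcongr
  calc ∑ i, a i * (-k * g i / s i) ≤ ∑ i, (-k * a i ^ 2 / B + k * η * ‖a‖ / ε) :=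
        Finset.sum_le_sum fun i _ => hterm i
    _ = -k * ‖a‖ ^ 2 / B + Fintype.card ι * (k * η * ‖a‖ / ε) := by
        rw [Finset.sum_add_distrib, EuclideanSpace.real_norm_sq_eq, Finset.mul_sum,
          Finset.sum_div, Finset.sum_const, nsmul_eq_mul, Finset.card_univ]

theorem sum_mul_neg_mul_div_neg {ι : Type*} [Fintype ι] {a : EuclideanSpace ℝ ι} {g s : ι → ℝ}
    {k ε B δ : ℝ} (hk : 0 < k) (hε : 0 < ε) (hs : ∀ i, ε ≤ s i ∧ s i ≤ B) (hδ : 0 < δ)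
    (ha : δ ≤ ‖a‖) (hg : ∀ i, |g i - a i| ≤ δ * ε / (B * (Fintype.card ι + 1))) :
    ∑ i, a i * (-k * g i / s i) < 0 := by
  have hB : 0 < B := by
    obtain ⟨i⟩ : Nonempty ι := by
      by_contra hι
      rw [not_nonempty_iff] at hι
      rw [Subsingleton.elim a 0, norm_zero] at ha
      linarith
    exact hε.trans_le ((hs i).1.trans (hs i).2)
  set N : ℝ := (Fintype.card ι : ℝ)
  have hrewrite : -k * ‖a‖ ^ 2 / B + N * (k * (δ * ε / (B * (N + 1))) * ‖a‖ / ε) =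
      k * ‖a‖ / B * (N / (N + 1) * δ - ‖a‖) := by
    field_simp
    ring
  have hfrac : N / (N + 1) * δ < ‖a‖ := by
    have : N / (N + 1) < 1 := (div_lt_one (by positivity)).2 (lt_add_one N)
    nlinarith
  calc ∑ i, a i * (-k * g i / s i) ≤ _ := sum_mul_neg_mul_div_le a hk.le hε hs hg
    _ = k * ‖a‖ / B * (N / (N + 1) * δ - ‖a‖) := hrewrite
    _ < 0 := mul_neg_of_pos_of_neg (div_pos (mul_pos hk (hδ.trans_le ha)) hB) (by linarith)

theorem sublevel_forward_invariant_general (n : ℕ)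
    (J : EuclideanSpace ℝ (Fin n) → ℝ) (θs : EuclideanSpace ℝ (Fin n))
    (hJ : ContDiff ℝ 1 J)
    (hgrad : ∀ θ, gradient J θ = 0 ↔ θ = θs)
    (hcoercive : ∀ M : ℝ, ∃ R : ℝ, ∀ θ : EuclideanSpace ℝ (Fin n), R ≤ ‖θ‖ → M ≤ J θ)
    (k ε c V : ℝ) (hk : 0 < k) (hε : 0 < ε) (hc : 0 < c) :
    ∃ η : ℝ, 0 < η ∧
      ∀ g : EuclideanSpace ℝ (Fin n) → EuclideanSpace ℝ (Fin n), Continuous g →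
        (∀ θ : EuclideanSpace ℝ (Fin n), J θ - J θs ≤ c →
          ∀ i, |g θ i - gradient J θ i| ≤ η) →
        ∀ (θb : ℝ → EuclideanSpace ℝ (Fin n)) (vb : ℝ → Fin n → ℝ),
          (∀ t, 0 ≤ t → ∀ i, 0 ≤ vb t i ∧ vb t i ≤ V) →
          (∀ t, 0 ≤ t → ∀ i,
            HasDerivAt (fun u => θb u i) (-k * g (θb t) i / (Real.sqrt (vb t i) + ε)) t) →
          J (θb 0) - J θs ≤ c →
          ∀ t, 0 ≤ t → J (θb t) - J θs ≤ c := by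
  have hlevel : IsCompact {θ | J θ - J θs = c} :=
    (isCompact_sublevel_of_coercive hJ.continuous hcoercive (J θs + c)).of_isClosed_subset
      (isClosed_eq (hJ.continuous.sub continuous_const) continuous_const)
      fun θ hθ => by simp only [mem_ofPred_eq] at hθ ⊢; linarith
  obtain ⟨δ, hδ, hδle⟩ := hlevel.exists_forall_le' hJ.continuous_gradient.norm.continuousOn
    fun θ hθ => norm_pos_iff.2 fun h0 => by
      simp only [mem_ofPred_eq, (hgrad θ).1 h0, sub_self] at hθ
      exact hc.ne hθ
  refine ⟨δ * ε / ((√V + ε) * (n + 1)), by positivity, ?_⟩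
  intro g _ hgη θb vb hvb hode h0 t ht
  have hscale : ∀ s, 0 ≤ s → ∀ i, ε ≤ √(vb s i) + ε ∧ √(vb s i) + ε ≤ √V + ε := fun s hs i =>
    ⟨le_add_of_nonneg_left (Real.sqrt_nonneg _), by gcongr; exact (hvb s hs i).2⟩
  refine le_of_hasDerivAt_neg_at_level (f := fun s => J (θb s) - J θs)
    (fun s hs => ((hJ.differentiable one_ne_zero _).hasGradientAt.hasDerivAt_comp_of_forall_apply
      (hode s hs)).sub_const _) h0 (fun s hs hs_level => ?_) ht
  exact sum_mul_neg_mul_div_neg hk hε (hscale s hs) hδ (hδle _ hs_level)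
    (by simpa only [Fintype.card_fin] using hgη _ hs_level.le)

/-- Forward invariance of sublevel sets of the normalized-gradient flow
with sufficiently accurate gradient estimates and filter states confined to `[0, V]`. -/
theorem sublevel_forward_invariant (n : ℕ)
    (J : EuclideanSpace ℝ (Fin n) → ℝ) (θs : EuclideanSpace ℝ (Fin n))
    (hJ : ContDiff ℝ 1 J)
    (hmin : ∀ θ, θ ≠ θs → J θs < J θ)
    (hgrad : ∀ θ, gradient J θ = 0 ↔ θ = θs)
    (hcoercive : ∀ M : ℝ, ∃ R : ℝ, ∀ θ : EuclideanSpace ℝ (Fin n), R ≤ ‖θ‖ → M ≤ J θ)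
    (k ε c V : ℝ) (hk : 0 < k) (hε : 0 < ε) (hc : 0 < c) (hV : 0 ≤ V) :
    ∃ η : ℝ, 0 < η ∧
      ∀ g : EuclideanSpace ℝ (Fin n) → EuclideanSpace ℝ (Fin n), Continuous g →
        (∀ θ : EuclideanSpace ℝ (Fin n), J θ - J θs ≤ c →
          ∀ i, |g θ i - gradient J θ i| ≤ η) →
        ∀ (θb : ℝ → EuclideanSpace ℝ (Fin n)) (vb : ℝ → Fin n → ℝ),
          (∀ t, 0 ≤ t → ∀ i, 0 ≤ vb t i ∧ vb t i ≤ V) →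
          (∀ t, 0 ≤ t → ∀ i,
            HasDerivAt (fun u => θb u i) (-k * g (θb t) i / (Real.sqrt (vb t i) + ε)) t) →
          J (θb 0) - J θs ≤ c →
          ∀ t, 0 ≤ t → J (θb t) - J θs ≤ c :=
  sublevel_forward_invariant_general n J θs hJ hgrad hcoercive k ε c V hk hε hc
end

section
/- Let J : ℝⁿ → ℝ be continuously differentiable and let θ_0 ∈ ℝⁿ satisfy ∇J(θ_0) = 0. Fix pairwise distinct positive integers r_1,…,r_n, relative amplitudes α_1,…,α_n with α_i ≠ 0 and Σ_{i=1}^n α_i² = 1, and ω > 0 with period T = 2π/ω. For a_0 > 0 define s_i(t) = α_i a_0 sin(ω r_i t), m_i(t) = (2/(α_i a_0)) sin(ω r_i t), the average cost J̄(θ_0) = (1/T) ∫_0^T J(θ_0 + s(t)) dt, and the average squared gradient estimate ḡ²_i(θ_0, J̄(θ_0)) = (1/T) ∫_0^T ( m_i(t) ( J(θ_0 + s(t)) − J̄(θ_0) ) )² dt. Then for every i, ḡ²_i(θ_0, J̄(θ_0)) → 0 as a_0 → 0⁺. -/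
/-!
At a stationary point the cost is flat to first order: for every `c > 0` and all small
dithers, `|J (θ₀ + s(t)) - J θ₀| ≤ c a₀`, hence also `|J̄(θ₀) - J θ₀| ≤ c a₀` and
`|J (θ₀ + s(t)) - J̄(θ₀)| ≤ 2 c a₀`. The demodulation factor `2 / (αᵢ a₀)` cancels the
`a₀`, so the squared estimate is bounded by `(4 c / αᵢ)²` uniformly in `t`, and so is its
average; `c` is arbitrary.
-/

open Real

lemma eventually_abs_sub_le_of_gradient_eq_zero {F : Type*} [NormedAddCommGroup F]
    [InnerProductSpace ℝ F] [CompleteSpace F] {f : F → ℝ} {x : F}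
    (hf : DifferentiableAt ℝ f x) (hx : gradient f x = 0) {c : ℝ} (hc : 0 < c) :
    ∀ᶠ y in nhds x, |f y - f x| ≤ c * ‖y - x‖ := by
  have hlo := hasGradientAt_iff_isLittleO.1 (hx ▸ hf.hasGradientAt)
  simpa using hlo.def hc

lemma norm_toLp_mul_sin_le {ι : Type*} [Fintype ι] {α φ : ι → ℝ} (hα : ∑ j, α j ^ 2 ≤ 1)
    {a : ℝ} (ha : 0 ≤ a) :
    ‖(WithLp.toLp 2 (fun j => α j * a * sin (φ j)) : EuclideanSpace ℝ ι)‖ ≤ a := by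
  rw [EuclideanSpace.norm_eq]
  refine (sqrt_le_sqrt ?_).trans_eq (sqrt_sq ha)
  calc ∑ j, ‖α j * a * sin (φ j)‖ ^ 2
      = ∑ j, α j ^ 2 * a ^ 2 * sin (φ j) ^ 2 := by simp only [norm_eq_abs, sq_abs, mul_pow]
    _ ≤ ∑ j, α j ^ 2 * a ^ 2 :=
        Finset.sum_le_sum fun j _ => mul_le_of_le_one_right (by positivity) (sin_sq_le_one _)
    _ ≤ a ^ 2 := by
        rw [← Finset.sum_mul]
        exact mul_le_of_le_one_left (sq_nonneg a) hα

lemma abs_average_le_of_abs_le {f : ℝ → ℝ} {T C : ℝ} (hf : ∀ t, |f t| ≤ C) :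
    |(1 / T) * ∫ t in (0 : ℝ)..T, f t| ≤ C := by
  have hint : |∫ t in (0 : ℝ)..T, f t| ≤ C * |T| := by
    simpa using intervalIntegral.norm_integral_le_of_norm_le_const (a := 0) (b := T)
      fun t _ => (norm_eq_abs _).trans_le (hf t)
  rcases eq_or_ne T 0 with rfl | hT
  · simpa using (abs_nonneg _).trans (hf 0)
  calc |(1 / T) * ∫ t in (0 : ℝ)..T, f t| ≤ (1 / |T|) * (C * |T|) := by
        rw [abs_mul, abs_div, abs_one]
        gcongr
    _ = C := by field_simp

lemma abs_average_sub_le_of_abs_sub_le {f : ℝ → ℝ} {T C y : ℝ} (hT : T ≠ 0)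
    (hf : IntervalIntegrable f MeasureTheory.volume 0 T) (hfy : ∀ t, |f t - y| ≤ C) :
    |(1 / T) * (∫ t in (0 : ℝ)..T, f t) - y| ≤ C := by
  have hsub :
      (1 / T) * (∫ t in (0 : ℝ)..T, f t) - y = (1 / T) * ∫ t in (0 : ℝ)..T, (f t - y) := by
    rw [intervalIntegral.integral_sub hf intervalIntegrable_const, intervalIntegral.integral_const,
      smul_eq_mul]
    field_simp
    ring
  rw [hsub]
  exact abs_average_le_of_abs_le hfy

lemma sq_div_mul_mul_le {α a s d K : ℝ} (hs : |s| ≤ 1) (hd : |d| ≤ K * |a|) :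
    (2 / (α * a) * s * d) ^ 2 ≤ (2 * K / α) ^ 2 := by
  rcases eq_or_ne (α * a) 0 with hαa | hαa
  · simpa [hαa] using sq_nonneg _
  have hK : 0 ≤ K * |a| := (abs_nonneg d).trans hd
  refine sq_le_sq.2 ?_
  calc |2 / (α * a) * s * d| = 2 / (|α| * |a|) * |s| * |d| := by
        rw [abs_mul, abs_mul, abs_div, abs_mul, abs_two]
    _ ≤ 2 / (|α| * |a|) * 1 * (K * |a|) := by gcongr
    _ = |2 * K / α| := by
        have ha : 0 < |a| := abs_pos.2 (right_ne_zero_of_mul hαa)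
        have hα : 0 < |α| := abs_pos.2 (left_ne_zero_of_mul hαa)
        rw [abs_div, abs_mul, abs_two, abs_of_nonneg (nonneg_of_mul_nonneg_left hK ha)]
        field_simp

theorem average_squared_gradient_estimate_vanishes_general (n : ℕ)
    (J : EuclideanSpace ℝ (Fin n) → ℝ)
    (hJ : ContDiff ℝ 1 J)
    (θ0 : EuclideanSpace ℝ (Fin n)) (hθ0 : gradient J θ0 = 0)
    (r : Fin n → ℕ)
    (α : Fin n → ℝ) (hα : ∀ i, α i ≠ 0) (hαsum : ∑ i, (α i) ^ 2 = 1)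
    (ω : ℝ) (hω : 0 < ω) (i : Fin n) :
    ∀ ε : ℝ, 0 < ε → ∃ δ : ℝ, 0 < δ ∧ ∀ a0 : ℝ, 0 < a0 → a0 < δ →
      |(1 / (2 * Real.pi / ω)) *
          (∫ t in (0:ℝ)..(2 * Real.pi / ω),
            ((2 / (α i * a0)) * Real.sin (ω * (r i : ℝ) * t) *
              (J (WithLp.toLp 2 (fun j => θ0 j + α j * a0 * Real.sin (ω * (r j : ℝ) * t))) -
                (1 / (2 * Real.pi / ω)) *
                  (∫ u in (0:ℝ)..(2 * Real.pi / ω),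
                    J (WithLp.toLp 2 (fun j => θ0 j + α j * a0 * Real.sin (ω * (r j : ℝ) * u)))))) ^ 2)| < ε := by
  intro ε hε
  set c := |α i| * √ε / 8 with hc_def
  have hc : 0 < c := by have := abs_pos.2 (hα i); positivity
  obtain ⟨δ, hδ, hflat⟩ := Metric.eventually_nhds_iff.1
    (eventually_abs_sub_le_of_gradient_eq_zero (hJ.differentiable one_ne_zero θ0) hθ0 hc)
  refine ⟨δ, hδ, fun a0 ha0 ha0δ => ?_⟩
  set X : ℝ → EuclideanSpace ℝ (Fin n) :=
    fun t => WithLp.toLp 2 (fun j => θ0 j + α j * a0 * sin (ω * r j * t))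
  have hX : ∀ t, ‖X t - θ0‖ ≤ a0 := fun t => by
    have : X t - θ0 = WithLp.toLp 2 (fun j => α j * a0 * sin (ω * r j * t)) := by ext j; simp [X]
    exact this ▸ norm_toLp_mul_sin_le hαsum.le ha0.le
  have hJX : ∀ t, |J (X t) - J θ0| ≤ c * a0 := fun t =>
    (hflat ((dist_eq_norm _ _).trans_lt ((hX t).trans_lt ha0δ))).trans (by gcongr; exact hX t)
  have hJbar : |(1 / (2 * π / ω)) * (∫ u in (0 : ℝ)..(2 * π / ω), J (X u)) - J θ0| ≤ c * a0 :=
    abs_average_sub_le_of_abs_sub_le (by positivity)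
      ((hJ.continuous.comp (by fun_prop)).intervalIntegrable _ _) hJX
  refine (abs_average_le_of_abs_le fun t => ?_).trans_lt (?_ : (2 * (2 * c) / α i) ^ 2 < ε)
  · rw [abs_of_nonneg (sq_nonneg _)]
    refine sq_div_mul_mul_le (abs_sin_le_one _) ((abs_sub_le _ (J θ0) _).trans ?_)
    rw [abs_sub_comm (J θ0), abs_of_pos ha0]
    linarith [hJX t]
  · have hε4 : (2 * (2 * c) / α i) ^ 2 = ε / 4 := by
      rw [hc_def, div_pow, mul_pow, mul_pow, div_pow, mul_pow, sq_abs, sq_sqrt hε.le]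
      field_simp [hα i]
      ring
    linarith

/-- At a stationary point `θ₀` of `J`, the average squared gradient estimate
(evaluated with the washout state at the average cost) tends to `0` as the dither
amplitude `a₀` vanishes. -/
theorem average_squared_gradient_estimate_vanishes (n : ℕ)
    (J : EuclideanSpace ℝ (Fin n) → ℝ)
    (hJ : ContDiff ℝ 1 J)
    (θ0 : EuclideanSpace ℝ (Fin n)) (hθ0 : gradient J θ0 = 0)
    (r : Fin n → ℕ) (hrpos : ∀ i, 0 < r i) (hrinj : Function.Injective r)
    (α : Fin n → ℝ) (hα : ∀ i, α i ≠ 0) (hαsum : ∑ i, (α i) ^ 2 = 1)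
    (ω : ℝ) (hω : 0 < ω) (i : Fin n) :
    ∀ ε : ℝ, 0 < ε → ∃ δ : ℝ, 0 < δ ∧ ∀ a0 : ℝ, 0 < a0 → a0 < δ →
      |(1 / (2 * Real.pi / ω)) *
          (∫ t in (0:ℝ)..(2 * Real.pi / ω),
            ((2 / (α i * a0)) * Real.sin (ω * (r i : ℝ) * t) *
              (J (WithLp.toLp 2 (fun j => θ0 j + α j * a0 * Real.sin (ω * (r j : ℝ) * t))) -
                (1 / (2 * Real.pi / ω)) *
                  (∫ u in (0:ℝ)..(2 * Real.pi / ω),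
                    J (WithLp.toLp 2 (fun j => θ0 j + α j * a0 * Real.sin (ω * (r j : ℝ) * u)))))) ^ 2)| < ε :=
  average_squared_gradient_estimate_vanishes_general n J hJ θ0 hθ0 r α hα hαsum ω hω i
end
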